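/- Let p be a prime, let a and h be positive integers, and let m be an integer not divisible by p. Then for every integer d with −h+1 ≤ d ≤ h·p^a, the following equality holds in ℤ/pℤ: ∑_{j=0}^{h+1} (binom(h+1, j) − m·[j = h]) · ∑_{k=0}^{p^a−1} binom((h+1)k, k+d+j)·(m^k)⁻¹ = [p^a divides d+h] · binom(h+1, (d+h)/p^a + 1), where [P] is 1 if the condition P holds and 0 otherwise. -/

import Mathlib

/-!
With `g k = C((h+1)k, k+d+h)` and `q = p^a`, Vandermonde's identity collapses the sum over `j`
to `g (k+1) - m g k`, so the left side is `∑_{k<q} (g (k+1) - m g k) m⁻ᵏ`. This telescopes to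
`m (g q m⁻q - g 0) = g q`, since `m^q = m` in `ℤ/pℤ` and `g 0 = 0` as `d + h > 0`.
Finally `g q` is read off from `(1+X)^((h+1)q) = (1+X^q)^(h+1)` in characteristic `p`.
-/

/-- Binomial coefficient with an integer lower index: zero for negative lower index. -/
def ibinom (n : ℕ) (j : ℤ) : ℕ := if 0 ≤ j then n.choose j.toNat else 0

open Finset Polynomial

lemma ibinom_natCast (n k : ℕ) : ibinom n k = n.choose k := by
  simp [ibinom]

lemma ibinom_of_neg {n : ℕ} {j : ℤ} (hj : j < 0) : ibinom n j = 0 :=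
  if_neg (by omega)

lemma ibinom_of_lt {n : ℕ} {j : ℤ} (hj : n < j) : ibinom n j = 0 := by
  rw [ibinom, if_pos (by omega), Nat.choose_eq_zero_of_lt (by omega)]

lemma ibinom_succ_succ (n : ℕ) (j : ℤ) :
    ibinom (n + 1) (j + 1) = ibinom n j + ibinom n (j + 1) := by
  rcases lt_trichotomy j (-1) with hj | rfl | hj
  · rw [ibinom_of_neg (by omega : j + 1 < 0), ibinom_of_neg (by omega : j < 0),
      ibinom_of_neg (by omega : j + 1 < 0)]
  · simp [ibinom]
  · lift j to ℕ using (by omega)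
    exact_mod_cast Nat.choose_succ_succ' n j

lemma sum_range_choose_mul_ibinom (n r : ℕ) (t : ℤ) :
    ∑ j ∈ range (r + 1), r.choose j * ibinom n (t + j) = ibinom (n + r) (t + r) := by
  induction r generalizing t with
  | zero => simp
  | succ r ih =>
    have split := sum_choose_succ_mul (R := ℕ) (fun i _ => ibinom n (t + i)) r
    have shift (i : ℕ) : t + ↑(i + 1) = t + 1 + i := by push_cast; ring
    simp only [Nat.cast_id, shift] at split
    rw [split, ih t, ih (t + 1), add_right_comm t 1, ← ibinom_succ_succ]
    push_cast
    ring_nf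

lemma cast_choose_pow_mul {R : Type*} [CommRing R] (p : ℕ) [ExpChar R p] (a A n : ℕ) :
    ((p ^ a * A).choose n : R) = if p ^ a ∣ n then (A.choose (n / p ^ a) : R) else 0 := by
  have hq : 0 < p ^ a := pow_pos (expChar_pos R p) a
  have hexpand : ((X + 1 : R[X]) ^ (p ^ a * A)) = expand R (p ^ a) ((X + 1) ^ A) := by
    rw [pow_mul, add_pow_expChar_pow, one_pow]; simp
  rw [← coeff_X_add_one_pow R, hexpand, coeff_expand hq, coeff_X_add_one_pow]

lemma sum_range_sub_mul_mul_inv_pow {K : Type*} [Field K] {m : K} (hm : m ≠ 0) (g : ℕ → K)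
    (q : ℕ) :
    ∑ k ∈ range q, (g (k + 1) - m * g k) * (m ^ k)⁻¹ = m * (g q * (m ^ q)⁻¹ - g 0) := by
  calc ∑ k ∈ range q, (g (k + 1) - m * g k) * (m ^ k)⁻¹
      = m * ∑ k ∈ range q, (g (k + 1) * (m ^ (k + 1))⁻¹ - g k * (m ^ k)⁻¹) := by
        rw [mul_sum]
        refine sum_congr rfl fun k _ => ?_
        field_simp
        ring
    _ = m * (g q * (m ^ q)⁻¹ - g 0) := by
        rw [sum_range_sub (fun k => g k * (m ^ k)⁻¹), pow_zero, inv_one, mul_one]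

lemma sum_range_choose_sub_mul_ibinom {R : Type*} [CommRing R] (c : R) (h k : ℕ) (d : ℤ) :
    ∑ j ∈ range (h + 2), (((h + 1).choose j : R) - c * if j = h then 1 else 0) *
      (ibinom ((h + 1) * k) (k + d + j) : R) =
      ibinom ((h + 1) * (k + 1)) (↑(k + 1) + d + h) - c * ibinom ((h + 1) * k) (k + d + h) := by
  have vandermonde := sum_range_choose_mul_ibinom ((h + 1) * k) (h + 1) (k + d)
  rw [show (h + 1) * k + (h + 1) = (h + 1) * (k + 1) by ring,
    show (k : ℤ) + d + ↑(h + 1) = ↑(k + 1) + d + h by push_cast; ring] at vandermonde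
  simp only [sub_mul, sum_sub_distrib, mul_ite, mul_one, mul_zero, ite_mul, zero_mul,
    sum_ite_eq', mem_range, show h < h + 2 by omega, if_true, ← vandermonde]
  push_cast
  rfl

lemma cast_ibinom_mul_pow_add {R : Type*} [CommRing R] (p : ℕ) [ExpChar R p]
    (A a : ℕ) {e : ℤ} (he : 0 ≤ e) :
    (ibinom (A * p ^ a) (↑(p ^ a) + e) : R) =
      if (p : ℤ) ^ a ∣ e then (A.choose ((e / (p : ℤ) ^ a).toNat + 1) : R) else 0 := by
  lift e to ℕ using he
  have hq : 0 < p ^ a := pow_pos (expChar_pos R p) a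
  rw [← Nat.cast_add, ibinom_natCast, mul_comm, cast_choose_pow_mul]
  simp only [Nat.dvd_add_self_left, Nat.add_div_left _ hq, ← Nat.cast_pow,
    Int.natCast_dvd_natCast, ← Int.natCast_div, Int.toNat_natCast]

theorem stmt_14_general (p : ℕ) (hp : p.Prime) (a h : ℕ)
    (m : ℤ) (hm : ¬ ((p : ℤ) ∣ m)) (d : ℤ)
    (hd1 : -(h : ℤ) + 1 ≤ d) :
    (∑ j ∈ Finset.range (h + 2),
        (((h + 1).choose j : ZMod p) - (m : ZMod p) * (if j = h then 1 else 0)) *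
          ∑ k ∈ Finset.range (p ^ a),
            (ibinom ((h + 1) * k) ((k : ℤ) + d + (j : ℤ)) : ZMod p) * ((m : ZMod p) ^ k)⁻¹) =
      if ((p : ℤ) ^ a ∣ d + (h : ℤ)) then
        (((h + 1).choose (((d + (h : ℤ)) / (p : ℤ) ^ a).toNat + 1)) : ZMod p)
      else 0 := by
  have : Fact p.Prime := ⟨hp⟩
  have hm0 : (m : ZMod p) ≠ 0 := by rwa [Ne, ZMod.intCast_zmod_eq_zero_iff_dvd]
  set g : ℕ → ZMod p := fun k => (ibinom ((h + 1) * k) (k + d + h) : ZMod p)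
  have hg0 : g 0 = 0 := by
    simp only [g, mul_zero, Nat.cast_zero, zero_add]
    rw [ibinom_of_lt (by omega), Nat.cast_zero]
  calc _ = ∑ k ∈ range (p ^ a), (g (k + 1) - m * g k) * ((m : ZMod p) ^ k)⁻¹ := by
          simp_rw [mul_sum, ← mul_assoc]
          rw [sum_comm]
          simp_rw [← sum_mul, sum_range_choose_sub_mul_ibinom]
          rfl
    _ = m * (g (p ^ a) * ((m : ZMod p) ^ (p ^ a))⁻¹ - g 0) :=
          sum_range_sub_mul_mul_inv_pow hm0 g _
    _ = g (p ^ a) := by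
          rw [ZMod.pow_card_pow, hg0, sub_zero]
          field_simp
    _ = _ := by
          simp only [g, add_assoc]
          exact cast_ibinom_mul_pow_add p (h + 1) a (by omega)

theorem stmt_14 (p : ℕ) (hp : p.Prime) (a h : ℕ) (ha : 0 < a) (hh : 0 < h)
    (m : ℤ) (hm : ¬ ((p : ℤ) ∣ m)) (d : ℤ)
    (hd1 : -(h : ℤ) + 1 ≤ d) (hd2 : d ≤ (h : ℤ) * (p : ℤ) ^ a) :
    (∑ j ∈ Finset.range (h + 2),
        (((h + 1).choose j : ZMod p) - (m : ZMod p) * (if j = h then 1 else 0)) *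
          ∑ k ∈ Finset.range (p ^ a),
            (ibinom ((h + 1) * k) ((k : ℤ) + d + (j : ℤ)) : ZMod p) * ((m : ZMod p) ^ k)⁻¹) =
      if ((p : ℤ) ^ a ∣ d + (h : ℤ)) then
        (((h + 1).choose (((d + (h : ℤ)) / (p : ℤ) ^ a).toNat + 1)) : ZMod p)
      else 0 :=
  stmt_14_general p hp a h m hm d hd1
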